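/- arXiv:math/9803137 — 3 statements merged into one kernel-verified Lean document; each statement's English description precedes it below -/
import Mathlib

section
/- Let m be a positive integer and let C, C' be finite-dimensional chain complexes of length m. Define α_q(C) = Σ_{j≤q} dim C_j mod 2, β_q(C) = Σ_{j≤q} dim H_j(C) mod 2, N(C) = Σ_{q=0}^m α_q(C)β_q(C) mod 2, and M(V,W) = Σ_{q=1}^m α_{q-1}(V)α_q(W) mod 2. Then N(C) + N(C') + M(C,C') ≡ N(C⊕C') + M(H_*(C), H_*(C')) + y (mod 2), where y = β_m(C)β_m(C') + Σ_{q=0}^m [β_q(C)α_q(C') + β_{q-1}(C)β_q(C') + α_{q-1}(C)α_q(C') + α_{q-1}(C)β_{q-1}(C')]. -/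
open Finset

/-- Mod-2 partial sum of dimensions: `α_q = Σ_{j=0}^q dim_j (mod 2)`. -/
def alphaSgn (c : ℕ → ℕ) (q : ℕ) : ZMod 2 := ((∑ j ∈ range (q + 1), c j : ℕ) : ZMod 2)

/-- `N(C) = Σ_{q=0}^m α_q(C) β_q(C) (mod 2)`. -/
def NSgn (c h : ℕ → ℕ) (m : ℕ) : ZMod 2 :=
  ∑ q ∈ range (m + 1), alphaSgn c q * alphaSgn h q

/-- `M(V,W) = Σ_{q=1}^m α_{q-1}(V) α_q(W) (mod 2)`. -/
def MSgn (v w : ℕ → ℕ) (m : ℕ) : ZMod 2 :=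
  ∑ q ∈ Icc 1 m, alphaSgn v (q - 1) * alphaSgn w q

/-- `y = β_m(C)β_m(C') + Σ_{q=0}^m [β_q(C)α_q(C') + β_{q-1}(C)β_q(C')
      + α_{q-1}(C)α_q(C') + α_{q-1}(C)β_{q-1}(C')]` with indices `-1` giving `0`. -/
def ySgn (c h c' h' : ℕ → ℕ) (m : ℕ) : ZMod 2 :=
  alphaSgn h m * alphaSgn h' m
  + (∑ q ∈ range (m + 1), alphaSgn h q * alphaSgn c' q)
  + (∑ q ∈ Icc 1 m, alphaSgn h (q - 1) * alphaSgn h' q)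
  + (∑ q ∈ Icc 1 m, alphaSgn c (q - 1) * alphaSgn c' q)
  + (∑ q ∈ Icc 1 m, alphaSgn c (q - 1) * alphaSgn h' (q - 1))


lemma alpha_add (c c' : ℕ → ℕ) (q : ℕ) :
    alphaSgn (fun j => c j + c' j) q = alphaSgn c q + alphaSgn c' q := by
  simp [alphaSgn, Finset.sum_add_distrib]

lemma alpha_top (m : ℕ) (c h r : ℕ → ℕ)
    (hr0 : r 0 = 0) (hrtop : r (m + 1) = 0)
    (hc : ∀ q ≤ m, c q = h q + r q + r (q + 1)) :
    alphaSgn c m = alphaSgn h m := by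
  have key : ∑ j ∈ range (m + 1), c j
      = (∑ j ∈ range (m + 1), h j) + 2 * ∑ j ∈ range m, r (j + 1) := by
    have h1 : ∑ j ∈ range (m + 1), c j
        = ∑ j ∈ range (m + 1), (h j + r j + r (j + 1)) :=
      Finset.sum_congr rfl fun j hj => hc j (Nat.lt_succ_iff.mp (mem_range.mp hj))
    have h2 : ∑ j ∈ range (m + 1), r j = ∑ j ∈ range m, r (j + 1) := by
      rw [Finset.sum_range_succ', hr0, add_zero]
    have h3 : ∑ j ∈ range (m + 1), r (j + 1) = ∑ j ∈ range m, r (j + 1) := by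
      rw [Finset.sum_range_succ, hrtop, add_zero]
    rw [h1, Finset.sum_add_distrib, Finset.sum_add_distrib, h2, h3]
    ring
  unfold alphaSgn
  rw [key]
  push_cast
  rw [show (2 : ZMod 2) = 0 from rfl]
  ring_nf

/-- for chain complexes `C`, `C'` of length `m`, with
`dim C_q = dim H_q(C) + r_q + r_{q+1}` (where `r_q` is the rank of the `q`-th boundary map,
`r_0 = r_{m+1} = 0`), one has
`N(C) + N(C') + M(C,C') ≡ N(C⊕C') + M(H_*(C),H_*(C')) + y (mod 2)`. -/
theorem statement0 (m : ℕ) (hm : 0 < m) (c h r c' h' r' : ℕ → ℕ)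
    (hr0 : r 0 = 0) (hrtop : r (m + 1) = 0)
    (hr0' : r' 0 = 0) (hrtop' : r' (m + 1) = 0)
    (hc : ∀ q ≤ m, c q = h q + r q + r (q + 1))
    (hc' : ∀ q ≤ m, c' q = h' q + r' q + r' (q + 1)) :
    NSgn c h m + NSgn c' h' m + MSgn c c' m
      = NSgn (fun q => c q + c' q) (fun q => h q + h' q) m
        + MSgn h h' m + ySgn c h c' h' m := by
  have ha : alphaSgn c m = alphaSgn h m := alpha_top m c h r hr0 hrtop hc
  have ha' : alphaSgn c' m = alphaSgn h' m := alpha_top m c' h' r' hr0' hrtop' hc'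
  simp only [NSgn, MSgn, ySgn, alpha_add]
  have hsplit : ∑ q ∈ range (m + 1),
        (alphaSgn c q + alphaSgn c' q) * (alphaSgn h q + alphaSgn h' q)
      = (∑ q ∈ range (m + 1), alphaSgn c q * alphaSgn h q)
      + (∑ q ∈ range (m + 1), alphaSgn c q * alphaSgn h' q)
      + (∑ q ∈ range (m + 1), alphaSgn h q * alphaSgn c' q)
      + (∑ q ∈ range (m + 1), alphaSgn c' q * alphaSgn h' q) := by
    rw [← Finset.sum_add_distrib, ← Finset.sum_add_distrib, ← Finset.sum_add_distrib]
    exact Finset.sum_congr rfl fun q _ => by ring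
  have hicc : ∑ q ∈ Icc 1 m, alphaSgn c (q - 1) * alphaSgn h' (q - 1)
      = ∑ q ∈ range m, alphaSgn c q * alphaSgn h' q := by
    rw [← Finset.Ico_add_one_right_eq_Icc, Finset.sum_Ico_eq_sum_range]
    simp
  have htop : ∑ q ∈ range (m + 1), alphaSgn c q * alphaSgn h' q
      = (∑ q ∈ range m, alphaSgn c q * alphaSgn h' q)
        + alphaSgn h m * alphaSgn h' m := by
    rw [Finset.sum_range_succ, ha]
  rw [hsplit, hicc, htop]
  have h2 : (2 : ZMod 2) = 0 := rfl
  linear_combination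
    (-(∑ q ∈ range m, alphaSgn c q * alphaSgn h' q)
      - alphaSgn h m * alphaSgn h' m
      - (∑ q ∈ range (m + 1), alphaSgn h q * alphaSgn c' q)
      - (∑ q ∈ Icc 1 m, alphaSgn h (q - 1) * alphaSgn h' q)) * h2
end

section
/- Let α_0 ≤ α_1 ≤ ⋯ ≤ α_m be the partial sums α_q = Σ_{j=0}^q r_j of nonnegative integers r_0,...,r_m (numbers of q-cells), and suppose Σ_{q even} r_q = Σ_{q odd} r_q (Euler characteristic zero). Then R + M ≡ 0 (mod 2), where R = Σ_{q=0}^m r_q(r_q - 1)/2 and M = Σ_{q=0}^m α_{q-1}·α_q (with α_{-1}=0). -/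
open Finset

/-- Partial sums `α_q = Σ_{j=0}^q r_j` of the numbers of cells. -/
def alphaNat (r : ℕ → ℕ) (q : ℕ) : ℕ := ∑ j ∈ range (q + 1), r j

lemma choose2_succ (n : ℕ) : (n + 1).choose 2 = n.choose 2 + n := by
  rw [Nat.choose_succ_succ]
  simp [Nat.choose_one_right, Nat.add_comm]

lemma choose2_add (a b : ℕ) : (a + b).choose 2 = a.choose 2 + b.choose 2 + a * b := by
  induction b with
  | zero => simp
  | succ n ih =>
      have h1 : a + (n + 1) = (a + n) + 1 := by ring
      rw [h1, choose2_succ, choose2_succ, ih]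
      ring

lemma alpha_succ (r : ℕ → ℕ) (q : ℕ) :
    alphaNat r (q + 1) = alphaNat r q + r (q + 1) := by
  simp [alphaNat, Finset.sum_range_succ]

lemma telescope (r : ℕ → ℕ) (m : ℕ) :
    (alphaNat r m).choose 2
      = (∑ q ∈ range (m+1), (r q).choose 2)
        + ∑ q ∈ Icc 1 m, alphaNat r (q-1) * r q := by
  induction m with
  | zero => simp [alphaNat]
  | succ n ih =>
      rw [alpha_succ, choose2_add, ih,
        Finset.sum_Icc_succ_top (Nat.succ_le_succ (Nat.zero_le n)),
        Finset.sum_range_succ (fun q => (r q).choose 2) (n+1)]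
      simp only [Nat.add_sub_cancel]
      ring

lemma sumalpha (r : ℕ → ℕ) (m : ℕ) :
    (∑ q ∈ range (m+1), alphaNat r q) + ∑ j ∈ range (m+1), j * r j
      = (m+1) * alphaNat r m := by
  induction m with
  | zero => simp [alphaNat]
  | succ n ih =>
      have ihz : ((∑ q ∈ range (n+1), alphaNat r q : ℕ) : ℤ)
          + ((∑ j ∈ range (n+1), j * r j : ℕ) : ℤ)
          = ((n : ℤ) + 1) * (alphaNat r n : ℤ) := by exact_mod_cast ih
      have : ((∑ q ∈ range (n+2), alphaNat r q : ℕ) : ℤ)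
          + ((∑ j ∈ range (n+2), j * r j : ℕ) : ℤ)
          = ((n : ℤ) + 2) * (alphaNat r (n+1) : ℤ) := by
        rw [Finset.sum_range_succ (alphaNat r) (n+1),
          Finset.sum_range_succ (fun j => j * r j) (n+1), alpha_succ]
        push_cast
        push_cast at ihz
        linear_combination ihz
      exact_mod_cast this

lemma sum_shift (f : ℕ → ℕ) (m : ℕ) :
    ∑ q ∈ Icc 1 m, f (q-1) = ∑ q ∈ range m, f q := by
  induction m with
  | zero => simp
  | succ n ih =>
      rw [Finset.sum_Icc_succ_top (Nat.succ_le_succ (Nat.zero_le n)),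
        Finset.sum_range_succ, ih]
      simp

lemma even_cast_zero {j : ℕ} (h : Even j) : (j : ZMod 2) = 0 := by
  obtain ⟨k, hk⟩ := h
  subst hk; push_cast
  have h2 : (2 : ZMod 2) = 0 := rfl
  linear_combination (k : ZMod 2) * h2

lemma odd_cast_one {j : ℕ} (h : Odd j) : (j : ZMod 2) = 1 := by
  obtain ⟨k, hk⟩ := h
  subst hk; push_cast
  have h2 : (2 : ZMod 2) = 0 := rfl
  linear_combination (k : ZMod 2) * h2

/-- if `Σ_{q even} r_q = Σ_{q odd} r_q` (Euler characteristic zero), then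
`R + M ≡ 0 (mod 2)` where `R = Σ_q r_q(r_q-1)/2` and `M = Σ_{q=1}^m α_{q-1} α_q`. -/
theorem statement8 (m : ℕ) (r : ℕ → ℕ)
    (hchi : (∑ q ∈ range (m + 1), if Even q then r q else 0)
          = ∑ q ∈ range (m + 1), if Odd q then r q else 0) :
    ((∑ q ∈ range (m + 1), r q * (r q - 1) / 2 : ℕ) : ZMod 2)
      + ((∑ q ∈ Icc 1 m, alphaNat r (q - 1) * alphaNat r q : ℕ) : ZMod 2) = 0 := by
  have h2 : (2 : ZMod 2) = 0 := rfl
  set P : ℕ := ∑ q ∈ range (m + 1), if Even q then r q else 0 with hP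
  -- α_m = 2P
  have ham : alphaNat r m = 2 * P := by
    have hsplit : alphaNat r m
        = (∑ q ∈ range (m + 1), if Even q then r q else 0)
          + ∑ q ∈ range (m + 1), if Odd q then r q else 0 := by
      rw [← Finset.sum_add_distrib]
      refine Finset.sum_congr rfl fun q _ => ?_
      rcases Nat.even_or_odd q with h | h
      · simp [h, Nat.not_odd_iff_even.mpr h]
      · simp [h, Nat.not_even_iff_odd.mpr h]
    rw [hsplit, ← hchi]
    omega
  have hxx : ∀ x : ZMod 2, x * x = x := by decide
  -- R = Σ choose 2
  have hR : (∑ q ∈ range (m + 1), r q * (r q - 1) / 2)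
      = ∑ q ∈ range (m + 1), (r q).choose 2 := by
    refine Finset.sum_congr rfl fun q _ => ?_
    rw [Nat.choose_two_right]
  -- cast of Σ j * r j equals cast of P
  have hjr : ((∑ j ∈ range (m+1), j * r j : ℕ) : ZMod 2) = (P : ZMod 2) := by
    rw [hchi, Nat.cast_sum, Nat.cast_sum]
    refine Finset.sum_congr rfl fun j _ => ?_
    push_cast
    rcases Nat.even_or_odd j with h | h
    · simp [Nat.not_odd_iff_even.mpr h, even_cast_zero h]
    · simp [h, odd_cast_one h]
  have hamz : (alphaNat r m : ZMod 2) = 0 := by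
    rw [ham]; push_cast
    linear_combination (P : ZMod 2) * h2
  -- S := cast of Σ_{q<m} α_q equals P
  have hS : ((∑ q ∈ range m, alphaNat r q : ℕ) : ZMod 2) = (P : ZMod 2) := by
    have h := sumalpha r m
    rw [Finset.sum_range_succ] at h
    have hc : ((∑ q ∈ range m, alphaNat r q : ℕ) : ZMod 2)
        + (alphaNat r m : ZMod 2) + ((∑ j ∈ range (m+1), j * r j : ℕ) : ZMod 2)
        = ((m+1 : ℕ) : ZMod 2) * (alphaNat r m : ZMod 2) := by
      exact_mod_cast congrArg (Nat.cast : ℕ → ZMod 2) h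
    rw [hamz, hjr] at hc
    have h0 : ((∑ q ∈ range m, alphaNat r q : ℕ) : ZMod 2) + (P : ZMod 2) = 0 := by
      simpa using hc
    linear_combination h0 - (P : ZMod 2) * h2
  -- A := choose (α_m) 2 cast equals P
  have hA : (((alphaNat r m).choose 2 : ℕ) : ZMod 2) = (P : ZMod 2) := by
    have hch : (alphaNat r m).choose 2 = P * (2 * P - 1) := by
      rw [ham, Nat.choose_two_right]
      rcases Nat.eq_zero_or_pos P with h0 | h0
      · simp [h0]
      · have he : 2 * P * (2 * P - 1) = 2 * (P * (2 * P - 1)) := by ring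
        rw [he, Nat.mul_div_cancel_left _ (by norm_num)]
    rw [hch]
    rcases Nat.eq_zero_or_pos P with h0 | h0
    · simp [h0]
    · have h1 : 2 * P - 1 + 1 = 2 * P := by omega
      have hc1 : ((2 * P - 1 : ℕ) : ZMod 2) = 1 := by
        have hc := congrArg (Nat.cast : ℕ → ZMod 2) h1
        push_cast at hc
        linear_combination hc + ((P : ZMod 2) - 1) * h2
      push_cast
      rw [hc1]; ring
  -- M = Σ α_{q-1} r_q + S  (mod 2)
  have hM : ((∑ q ∈ Icc 1 m, alphaNat r (q - 1) * alphaNat r q : ℕ) : ZMod 2)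
      = ((∑ q ∈ Icc 1 m, alphaNat r (q-1) * r q : ℕ) : ZMod 2)
        + ((∑ q ∈ range m, alphaNat r q : ℕ) : ZMod 2) := by
    rw [← sum_shift (alphaNat r) m, Nat.cast_sum, Nat.cast_sum, Nat.cast_sum,
      ← Finset.sum_add_distrib]
    refine Finset.sum_congr rfl fun q hq => ?_
    have hq1 : 1 ≤ q := (Finset.mem_Icc.mp hq).1
    have hstep : alphaNat r q = alphaNat r (q-1) + r q := by
      have := alpha_succ r (q-1)
      rwa [Nat.sub_add_cancel hq1] at this
    rw [hstep]
    push_cast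
    rw [mul_add, hxx]
    ring
  -- combine everything
  have htel := congrArg (Nat.cast : ℕ → ZMod 2) (telescope r m)
  push_cast at htel
  push_cast at hA
  rw [hR, hM, hS]
  push_cast
  linear_combination -htel + hA + (P : ZMod 2) * h2
end

section
/- Let m ≡ 1 (mod 4) and let b_0, b_1, ..., b_m be nonnegative integers with b_q = b_{m-q} for all q (Poincaré duality for F self-dual). Set s = Σ_{q=1}^m β_{q-1}β_q + Σ_{q=0}^{(m-1)/2} β_{2q} (mod 2) where β_q = Σ_{j=0}^q b_j mod 2. If the graded space decomposes as a direct sum over p = 0,...,(m-1)/2 of pieces concentrated in degrees p and m-p with equal dimensions b_p, then s ≡ Σ_{p=0}^{(m-1)/2} b_p (mod 2). -/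
open Finset

/-- Mod-2 partial sum: `β_q = Σ_{j=0}^q b_j (mod 2)`. -/
def betaSgn (b : ℕ → ℕ) (q : ℕ) : ZMod 2 := ((∑ j ∈ range (q + 1), b j : ℕ) : ZMod 2)

private lemma zmod2_eq_of_add_eq_zero {a c : ZMod 2} (h : a + c = 0) : a = c := by
  have := eq_neg_of_add_eq_zero_left h
  rwa [CharTwo.neg_eq] at this

/-- Splitting plus palindromy: prefix + reversed-suffix. -/
private lemma split_sum (k : ℕ) (b : ℕ → ℕ) (hb : ∀ q ≤ 4*k+1, b q = b (4*k+1 - q))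
    (j : ℕ) (hj : j ≤ 4*k+1) :
    ∑ i ∈ range (4*k+2), b i
      = ∑ i ∈ range (j+1), b i + ∑ i ∈ range (4*k+1-j), b i := by
  have hsplit : ∑ i ∈ range (j+1), b i + ∑ i ∈ Ico (j+1) (4*k+2), b i
      = ∑ i ∈ range (4*k+2), b i := by
    simp only [Finset.range_eq_Ico]
    exact Finset.sum_Ico_consecutive b (Nat.zero_le _) (by omega)
  have h2 : ∑ i ∈ Ico (j+1) (4*k+2), b i = ∑ i ∈ range (4*k+1-j), b i := by
    rw [Finset.sum_Ico_eq_sum_range]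
    have hr : 4*k+2 - (j+1) = 4*k+1-j := by omega
    rw [hr]
    calc ∑ i ∈ range (4*k+1-j), b (j+1+i)
        = ∑ i ∈ range (4*k+1-j), b ((4*k+1-j) - 1 - i) := by
          refine Finset.sum_congr rfl (fun i hi => ?_)
          simp only [Finset.mem_range] at hi
          rw [hb (j+1+i) (by omega)]
          congr 1
          omega
      _ = ∑ i ∈ range (4*k+1-j), b i := Finset.sum_range_reflect b _
  omega

/-- Total sum is twice the half sum. -/
private lemma total_sum (k : ℕ) (b : ℕ → ℕ) (hb : ∀ q ≤ 4*k+1, b q = b (4*k+1 - q)) :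
    ∑ j ∈ range (4*k+2), b j = 2 * ∑ j ∈ range (2*k+1), b j := by
  have := split_sum k b hb (2*k) (by omega)
  have h : 4*k+1-2*k = 2*k+1 := by omega
  rw [h] at this
  omega

/-- β is palindromic on `[0, 4k]`. -/
private lemma beta_palindrome (k : ℕ) (b : ℕ → ℕ) (hb : ∀ q ≤ 4*k+1, b q = b (4*k+1 - q))
    (j : ℕ) (hj : j ≤ 4*k) : betaSgn b j = betaSgn b (4*k - j) := by
  apply zmod2_eq_of_add_eq_zero
  unfold betaSgn
  rw [← Nat.cast_add]
  have key : ∑ i ∈ range (j+1), b i + ∑ i ∈ range (4*k - j + 1), b i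
      = ∑ i ∈ range (4*k+2), b i := by
    have := split_sum k b hb j (by omega)
    have h : 4*k+1-j = 4*k-j+1 := by omega
    rw [h] at this
    omega
  rw [key, total_sum k b hb]
  push_cast
  simp [CharTwo.two_eq_zero]

/-- for `m ≡ 1 (mod 4)` and a palindromic sequence of Betti numbers
`b_q = b (m-q)` (Poincaré duality for a self-dual flat bundle), the duality-sign exponent
`s = Σ_{q=1}^m β_{q-1}β_q + Σ_{q=0}^{(m-1)/2} β_{2q}` is congruent mod 2 to the
semi-characteristic `Σ_{p=0}^{(m-1)/2} b_p`. -/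
theorem statement15 (m : ℕ) (hm : m % 4 = 1) (b : ℕ → ℕ)
    (hb : ∀ q ≤ m, b q = b (m - q)) :
    (∑ q ∈ Icc 1 m, betaSgn b (q - 1) * betaSgn b q)
      + (∑ q ∈ range ((m - 1) / 2 + 1), betaSgn b (2 * q))
      = ((∑ p ∈ range ((m - 1) / 2 + 1), b p : ℕ) : ZMod 2) := by
  obtain ⟨k, rfl⟩ : ∃ k, m = 4*k+1 := ⟨m/4, by omega⟩
  have hb' : ∀ q ≤ 4*k+1, b q = b (4*k+1 - q) := hb
  have hpal := beta_palindrome k b hb'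
  have hβtop : betaSgn b (4*k+1) = 0 := by
    unfold betaSgn
    have h : 4*k+1+1 = 4*k+2 := by omega
    rw [h, total_sum k b hb']
    push_cast
    simp [CharTwo.two_eq_zero]
  have hhalf : (4*k+1-1)/2 = 2*k := by omega
  rw [hhalf]
  -- First sum is zero.
  have hS1 : (∑ q ∈ Icc 1 (4*k+1), betaSgn b (q - 1) * betaSgn b q) = 0 := by
    rw [Finset.sum_Icc_succ_top (by omega : 1 ≤ 4*k+1)]
    rw [hβtop, mul_zero, add_zero]
    apply Finset.sum_involution (fun q _ => 4*k+1 - q)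
    · intro q hq
      simp only [Finset.mem_Icc] at hq
      have h1 : betaSgn b (4*k+1-q-1) = betaSgn b q := by
        have h : 4*k+1-q-1 = 4*k - q := by omega
        rw [h, ← hpal q (by omega)]
      have h2 : betaSgn b (4*k+1-q) = betaSgn b (q-1) := by
        have e : 4*k - (q-1) = 4*k+1-q := by omega
        rw [← e, ← hpal (q-1) (by omega)]
      rw [h1, h2, mul_comm]
      exact CharTwo.add_self_eq_zero _
    · intro q hq _
      simp only [Finset.mem_Icc] at hq
      omega
    · intro q hq
      simp only [Finset.mem_Icc] at hq ⊢
      omega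
    · intro q hq
      simp only [Finset.mem_Icc] at hq
      omega
  rw [hS1, zero_add]
  -- Second sum equals β_{2k}.
  have hS2 : (∑ q ∈ range (2*k+1), betaSgn b (2 * q)) = betaSgn b (2*k) := by
    have hmem : k ∈ range (2*k+1) := by simp; omega
    rw [← Finset.add_sum_erase _ _ hmem]
    have hrest : ∑ q ∈ (range (2*k+1)).erase k, betaSgn b (2*q) = 0 := by
      apply Finset.sum_involution (fun q _ => 2*k - q)
      · intro q hq
        simp only [Finset.mem_erase, Finset.mem_range] at hq
        have h : betaSgn b (2*(2*k - q)) = betaSgn b (2*q) := by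
          have e : 2*(2*k-q) = 4*k - 2*q := by omega
          rw [e, ← hpal (2*q) (by omega)]
        rw [h]
        exact CharTwo.add_self_eq_zero _
      · intro q hq _
        simp only [Finset.mem_erase, Finset.mem_range] at hq
        omega
      · intro q hq
        simp only [Finset.mem_erase, Finset.mem_range] at hq ⊢
        omega
      · intro q hq
        simp only [Finset.mem_erase, Finset.mem_range] at hq
        omega
    rw [hrest, add_zero]
  rw [hS2]
  rfl
end
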